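/- Let U ⊆ ℂ be open and r ≥ 0. The set Hol(U, B̄_r(0)) of holomorphic functions f : U → ℂ with |f(z)| ≤ r for all z ∈ U is compact in the topology of locally uniform (compact) convergence on Hol(U,ℂ). -/

import Mathlib

/-!
A family of holomorphic functions bounded by `r` is equicontinuous: by Cauchy's estimate its
derivatives are bounded by `2r/R` on `B(x, R/2)` whenever `B̄(x, R) ⊆ U`, so the family is
uniformly Lipschitz near every point. Its values lie in the compact disc `B̄_r(0)`, and it is
closed for compact convergence, because the bound passes to pointwise limits and locally uniform
limits of holomorphic functions are holomorphic. Arzelà–Ascoli then gives compactness.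
-/

noncomputable section
open Filter Topology ContinuousLinearMap

namespace Paper

/-- Holomorphy of a function defined on (the subtype of) a set `U ⊆ ℂ`:
it extends to a function `ℂ → E` differentiable on `U`. -/
def HolFn (U : Set ℂ) {E : Type*} [NormedAddCommGroup E] [NormedSpace ℂ E]
    (f : ↥U → E) : Prop :=
  ∃ g : ℂ → E, DifferentiableOn ℂ g U ∧ ∀ z : ↥U, f z = g (z : ℂ)

/-- The topology of locally uniform (compact) convergence on functions `↥U → E`. -/
def kc (U : Set ℂ) (E : Type*) [UniformSpace E] : TopologicalSpace (↥U → E) :=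
  (UniformOnFun.uniformSpace ↥U E {K : Set ↥U | IsCompact K}).toTopologicalSpace

open Set Metric Function
open scoped NNReal UniformConvergence

theorem ArzelaAscoli.isCompact_image_ofFun {X α : Type*} [TopologicalSpace X] [UniformSpace α]
    {𝔖 : Set (Set X)} (h𝔖 : ∀ K ∈ 𝔖, IsCompact K) {S : Set (X → α)}
    (hS_closed : IsClosed (UniformOnFun.ofFun 𝔖 '' S))
    (hS_eqcont : ∀ K ∈ 𝔖, EquicontinuousOn ((↑) : S → X → α) K)
    (hS_ptwise : ∀ K ∈ 𝔖, ∀ x ∈ K, ∃ Q, IsCompact Q ∧ ∀ f ∈ S, f x ∈ Q) :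
    IsCompact (UniformOnFun.ofFun 𝔖 '' S) := by
  let : TopologicalSpace S := .induced (UniformOnFun.ofFun 𝔖 ∘ ((↑) : S → X → α)) inferInstance
  have hrange : range (UniformOnFun.ofFun 𝔖 ∘ ((↑) : S → X → α)) = UniformOnFun.ofFun 𝔖 '' S := by
    rw [range_comp, Subtype.range_coe]
  have : CompactSpace S :=
    ArzelaAscoli.compactSpace_of_closed_inducing' h𝔖 ⟨rfl⟩ (hrange ▸ hS_closed) hS_eqcont
      fun K hK x hx ↦ (hS_ptwise K hK x hx).imp fun _ ⟨hQ, hSQ⟩ ↦ ⟨hQ, fun f ↦ hSQ f f.2⟩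
  exact hrange ▸ isCompact_range continuous_induced_dom

theorem equicontinuousAt_of_lipschitzOnWith {ι X Y : Type*} [PseudoMetricSpace X]
    [PseudoMetricSpace Y] {F : ι → X → Y} {K : ℝ≥0} {s : Set X} {x : X} (hs : s ∈ 𝓝 x)
    (hF : ∀ i, LipschitzOnWith K (F i) s) : EquicontinuousAt F x :=
  Metric.equicontinuousAt_of_continuity_modulus (fun y ↦ K * dist x y)
    ((Continuous.tendsto' (by fun_prop) x 0 (by simp)) : Tendsto (fun y ↦ K * dist x y) _ _) F
    (eventually_of_mem hs fun y hy i ↦ (hF i).dist_le_mul x (mem_of_mem_nhds hs) y hy)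

theorem isClosed_setOf_forall_norm_le {X E : Type*} [TopologicalSpace X]
    [SeminormedAddCommGroup E] (r : ℝ) :
    IsClosed {f : X →ᵤ[{K | IsCompact K}] E | ∀ x, ‖UniformOnFun.toFun _ f x‖ ≤ r} := by
  simp only [ofPred_forall]
  exact isClosed_iInter fun x ↦ isClosed_le
    (UniformOnFun.uniformContinuous_eval_of_mem _ _ (mem_singleton x)
      isCompact_singleton).continuous.norm continuous_const

theorem tendstoLocallyUniformlyOn_extend {ι E : Type*} [UniformSpace E] [Zero E] {U : Set ℂ}
    (hU : IsOpen U) {F : ι → U → E} {f : U → E} {l : Filter ι}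
    (h : ∀ K : Set U, IsCompact K → TendstoUniformlyOn F f l K) :
    TendstoLocallyUniformlyOn (fun i ↦ extend (↑) (F i) 0) (extend (↑) f 0) l U := by
  have := hU.locallyCompactSpace
  rw [tendstoLocallyUniformlyOn_iff_tendstoLocallyUniformly_comp_coe,
    tendstoLocallyUniformly_iff_forall_isCompact]
  simpa [comp_def, Subtype.val_injective.extend_apply] using h

section Holomorphic

variable {E : Type*} [NormedAddCommGroup E] [NormedSpace ℂ E]

theorem lipschitzOnWith_ball_of_norm_le {U : Set ℂ} {f : ℂ → E} {M R : ℝ} {x : ℂ}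
    (hf : DifferentiableOn ℂ f U) (hM : ∀ z ∈ U, ‖f z‖ ≤ M) (hR : 0 < R)
    (hxR : closedBall x R ⊆ U) :
    LipschitzOnWith (M / (R / 2)).toNNReal f (ball x (R / 2)) := by
  have hsub : ∀ ζ ∈ ball x (R / 2), closedBall ζ (R / 2) ⊆ U := fun ζ hζ w hw ↦
    hxR <| mem_closedBall.mpr <| (dist_triangle w ζ x).trans <| by
      linarith [mem_closedBall.mp hw, (mem_ball.mp hζ).le]
  refine (convex_ball x (R / 2)).lipschitzOnWith_of_nnnorm_deriv_le (fun ζ hζ ↦ ?_) fun ζ hζ ↦ ?_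
  · exact hf.differentiableAt <| mem_of_superset (closedBall_mem_nhds ζ (half_pos hR)) (hsub ζ hζ)
  · have hcauchy : ‖deriv f ζ‖ ≤ M / (R / 2) :=
      Complex.norm_deriv_le_of_forall_mem_sphere_norm_le (half_pos hR)
        (hf.diffContOnCl_ball (hsub ζ hζ))
        fun z hz ↦ hM z (hsub ζ hζ (sphere_subset_closedBall hz))
    exact NNReal.coe_le_coe.mp (hcauchy.trans (Real.le_coe_toNNReal _))

theorem equicontinuousOn_of_differentiableOn_of_norm_le {ι : Type*} {U : Set ℂ} (hU : IsOpen U)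
    {F : ι → ℂ → E} {M : ℝ} (hF : ∀ i, DifferentiableOn ℂ (F i) U)
    (hM : ∀ i, ∀ z ∈ U, ‖F i z‖ ≤ M) : EquicontinuousOn F U := by
  intro x hx
  obtain ⟨R, hR, hxR⟩ := nhds_basis_closedBall.mem_iff.mp (hU.mem_nhds hx)
  exact (equicontinuousAt_of_lipschitzOnWith (ball_mem_nhds x (half_pos hR))
    fun i ↦ lipschitzOnWith_ball_of_norm_le (hF i) (hM i) hR hxR).equicontinuousWithinAt U

theorem holFn_iff_differentiableOn_extend {U : Set ℂ} {f : U → E} :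
    HolFn U f ↔ DifferentiableOn ℂ (extend (↑) f 0) U := by
  refine ⟨fun ⟨g, hg, hfg⟩ ↦ hg.congr fun z hz ↦ ?_, fun h ↦ ⟨_, h, fun z ↦ ?_⟩⟩
  · rw [← Subtype.coe_mk z hz, Subtype.val_injective.extend_apply, hfg]
  · rw [Subtype.val_injective.extend_apply]

theorem equicontinuous_of_holFn_of_norm_le {ι : Type*} {U : Set ℂ} (hU : IsOpen U)
    {F : ι → U → E} {M : ℝ} (hF : ∀ i, HolFn U (F i)) (hM : ∀ i z, ‖F i z‖ ≤ M) :
    Equicontinuous F := by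
  have := equicontinuousOn_of_differentiableOn_of_norm_le hU
    (fun i ↦ holFn_iff_differentiableOn_extend.mp (hF i)) fun i z hz ↦ by
      rw [← Subtype.coe_mk z hz, Subtype.val_injective.extend_apply]
      exact hM i _
  rw [← equicontinuous_restrict_iff] at this
  simpa [comp_def, domRestrict_def, Subtype.val_injective.extend_apply] using this

theorem isClosed_setOf_holFn [CompleteSpace E] {U : Set ℂ} (hU : IsOpen U) :
    IsClosed {f : U →ᵤ[{K | IsCompact K}] E | HolFn U (UniformOnFun.toFun _ f)} := by
  refine isClosed_iff_forall_filter.mpr fun f l hl hlS hlf ↦ ?_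
  have hconv := UniformOnFun.tendsto_iff_tendstoUniformlyOn.mp (tendsto_id.mono_left hlf)
  have hhol : ∀ᶠ g in l, DifferentiableOn ℂ (extend (↑) (UniformOnFun.toFun _ g) 0) U :=
    mem_of_superset (hlS (mem_principal_self _)) fun g hg ↦ holFn_iff_differentiableOn_extend.mp hg
  exact holFn_iff_differentiableOn_extend.mpr
    ((tendstoLocallyUniformlyOn_extend hU hconv).differentiableOn hhol hU)

end Holomorphic

theorem statement_17_general (U : Set ℂ) (hU : IsOpen U) (r : ℝ) :
    @IsCompact (↥U → ℂ) (kc U ℂ) {f | HolFn U f ∧ ∀ z : ↥U, ‖f z‖ ≤ r} := by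
  set S : Set (U → ℂ) := {f | HolFn U f ∧ ∀ z : ↥U, ‖f z‖ ≤ r}
  let 𝔖 : Set (Set U) := {K | IsCompact K}
  -- `kc U ℂ` is the topology of `U →ᵤ[𝔖] ℂ`, and `ofFun` is the identity.
  have hind : @IsInducing _ _ (kc U ℂ) _ (UniformOnFun.ofFun 𝔖) :=
    @IsInducing.id _ (UniformOnFun.topologicalSpace U ℂ 𝔖)
  rw [@IsInducing.isCompact_iff _ _ (kc U ℂ) _ _ _ hind]
  refine ArzelaAscoli.isCompact_image_ofFun (fun K hK ↦ hK) ?_ ?_ ?_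
  · rw [Equiv.image_eq_preimage_symm]
    exact (isClosed_setOf_holFn (E := ℂ) hU).inter (isClosed_setOf_forall_norm_le r)
  · exact fun K _ ↦ (equicontinuous_of_holFn_of_norm_le hU (F := ((↑) : S → U → ℂ))
      (fun f ↦ f.2.1) fun f ↦ f.2.2).equicontinuousOn K
  · exact fun _ _ z _ ↦ ⟨closedBall 0 r, isCompact_closedBall 0 r,
      fun f hf ↦ mem_closedBall_zero_iff.mpr (hf.2 z)⟩

/-- **Montel-type corollary.** For `U ⊆ ℂ` open and `r ≥ 0`, the set of
holomorphic functions on `U` bounded in modulus by `r` is compact in the topology of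
locally uniform (compact) convergence. -/
theorem statement_17 (U : Set ℂ) (hU : IsOpen U) (r : ℝ) (hr : 0 ≤ r) :
    @IsCompact (↥U → ℂ) (kc U ℂ) {f | HolFn U f ∧ ∀ z : ↥U, ‖f z‖ ≤ r} :=
  statement_17_general U hU r

end Paper
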